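/- arXiv:2202.02591 — 4 statements merged into one kernel-verified Lean document; each statement's English description precedes it below -/
import Mathlib

section
/- Let G be an abelian finite group, H ≤ G a subgroup, and R a commutative ring equipped with a ring homomorphism res : R → S and a multiplicative norm map N : S → R satisfying the double coset formula res(N(x)) = ∏_{g ∈ G/H} x for all x ∈ S (so res(N(x)) = x^{[G:H]} after identification). Let I ⊆ R be an ideal and J ⊆ S an ideal such that res(I) ⊆ J and N(J) ⊆ I. Then for any a ∈ S with aⁿ ∈ J for some n ≥ 1, there exists m ≥ 1 with a^m in the ideal of S generated by res(I); consequently √(res(I)·S) = √J whenever res(I)·S ⊆ J. -/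
/-- Abstract form of the augmentation-ideal lemma. Given commutative rings `R`, `S`, a ring
homomorphism `res : R →+* S`, a "norm" map `N : S → R` satisfying `res (N x) = x ^ d`
(the double coset formula, `d = [G : H] ≥ 1`), an ideal `I ⊆ R` and an ideal `J ⊆ S` with
`res(I)·S ⊆ J` and `N(J) ⊆ I`: any `a` with `aⁿ ∈ J` for some `n ≥ 1` has a power lying in
the ideal generated by `res(I)`, and consequently `√(res(I)·S) = √J`. -/
theorem norm_radical_comparison
    {R S : Type*} [CommRing R] [CommRing S]
    (res : R →+* S) (N : S → R) (d : ℕ) (hd : 1 ≤ d)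
    (hN : ∀ x : S, res (N x) = x ^ d)
    (I : Ideal R) (J : Ideal S)
    (hres : Ideal.map res I ≤ J) (hNJ : ∀ x ∈ J, N x ∈ I) :
    (∀ a : S, (∃ n, 1 ≤ n ∧ a ^ n ∈ J) → ∃ m, 1 ≤ m ∧ a ^ m ∈ Ideal.map res I) ∧
    (Ideal.map res I).radical = J.radical := by
  have key : ∀ a : S, (∃ n, 1 ≤ n ∧ a ^ n ∈ J) → ∃ m, 1 ≤ m ∧ a ^ m ∈ Ideal.map res I := by
    intro a ⟨n, hn, haJ⟩
    refine ⟨n * d, Nat.one_le_iff_ne_zero.mpr (by positivity), ?_⟩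
    have : res (N (a ^ n)) ∈ Ideal.map res I :=
      Ideal.mem_map_of_mem res (hNJ _ haJ)
    rwa [hN, ← pow_mul] at this
  refine ⟨key, le_antisymm (Ideal.radical_mono hres) ?_⟩
  intro a ha
  obtain ⟨n, hn⟩ := ha
  rcases Nat.eq_zero_or_pos n with rfl | hpos
  · simp at hn
    have : res (N (1 : S)) ∈ Ideal.map res I := Ideal.mem_map_of_mem res (hNJ _ (by simpa using hn))
    rw [hN, one_pow] at this
    have htop : Ideal.map res I = ⊤ := Ideal.eq_top_of_isUnit_mem _ this isUnit_one
    exact ⟨1, by rw [htop]; trivial⟩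
  · obtain ⟨m, hm, hmem⟩ := key a ⟨n, hpos, hn⟩
    exact ⟨m, hmem⟩
end

section
/- Suppose given a cospan of categories C → E ← D together with functors p* : A → C, q* : A → D, r* : A → E, commuting with the cospan maps (γ* : C → E, β* : D → E), where γ*, β*, p*, q*, r* all admit right adjoints γ_*, β_*, p_*, q_*, r_* respectively, and A has pullbacks. Then the induced functor A → C ×_E D has a right adjoint sending (c, d, e : γ*c ≃ β*d) to the pullback in A of p_*c → r_*γ*c ≃ r_*β*d ← q_*d, where the maps are p_*(η^γ_c) and q_*(η^β_d) for the units η^γ, η^β of the adjunctions γ* ⊣ γ_* and β* ⊣ β_*. -/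
open CategoryTheory

universe v₁ v₂ v₃ v₄ u₁ u₂ u₃ u₄

variable {A : Type u₁} {C : Type u₂} {D : Type u₃} {E : Type u₄}
variable [Category.{v₁} A] [Category.{v₂} C] [Category.{v₃} D] [Category.{v₄} E]

/-- The functor `A ⥤ Comma γ β` induced by `p`, `q` and the commutation data `σ`, `τ`
(over the common functor `r`). -/
def toComma (γ : C ⥤ E) (β : D ⥤ E) (p : A ⥤ C) (q : A ⥤ D) (r : A ⥤ E)
    (σ : p ⋙ γ ≅ r) (τ : q ⋙ β ≅ r) : A ⥤ Comma γ β where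
  obj a := { left := p.obj a, right := q.obj a, hom := σ.hom.app a ≫ τ.inv.app a }
  map {a b} f :=
    { left := p.map f
      right := q.map f
      w := by
        have h1 := σ.hom.naturality f
        have h2 := τ.inv.naturality f
        dsimp at h1 h2 ⊢
        simp only [← Category.assoc]
        rw [h1]
        simp only [Category.assoc]
        rw [h2] }

/-- The induced functor `A ⥤ C ×_E D`, where the pullback `C ×_E D` is realised as the full
subcategory of the comma category `Comma γ β` on the objects whose structure morphism
`γ(c) ⟶ β(d)` is invertible. -/
def toPB (γ : C ⥤ E) (β : D ⥤ E) (p : A ⥤ C) (q : A ⥤ D) (r : A ⥤ E)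
    (σ : p ⋙ γ ≅ r) (τ : q ⋙ β ≅ r) :
    A ⥤ ObjectProperty.FullSubcategory (fun X : Comma γ β => IsIso X.hom) :=
  ObjectProperty.lift _ (toComma γ β p q r σ τ) (fun a => by
    dsimp [toComma]
    infer_instance)

lemma ofNatIsoLeft_unit_app' {F : A ⥤ E} {G : A ⥤ E} {H : E ⥤ A} (adj : F ⊣ H) (iso : F ≅ G)
    (a : A) : (adj.ofNatIsoLeft iso).unit.app a = adj.unit.app a ≫ H.map (iso.hom.app a) := by
  simp [Adjunction.ofNatIsoLeft, Adjunction.mkOfHomEquiv, Adjunction.homEquiv_unit,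
    Adjunction.unit]

lemma key_transpose (F : A ⥤ C) (G : C ⥤ E) (H : A ⥤ E) (Fr : C ⥤ A) (Gr : E ⥤ C) (Hr : E ⥤ A)
    (adjF : F ⊣ Fr) (adjG : G ⊣ Gr) (adjH : H ⊣ Hr) (ρ : F ⋙ G ≅ H) (a : A) (c : C)
    (u : F.obj a ⟶ c) :
    (adjF.homEquiv a c) u ≫ Fr.map (adjG.unit.app c) ≫
      (Adjunction.rightAdjointUniq (adjF.comp adjG) (adjH.ofNatIsoLeft ρ.symm)).hom.app (G.obj c)
      = (adjH.homEquiv a (G.obj c)) (ρ.inv.app a ≫ G.map u) := by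
  set θ := (Adjunction.rightAdjointUniq (adjF.comp adjG) (adjH.ofNatIsoLeft ρ.symm)).hom with hθ
  have huniq : (adjF.comp adjG).unit.app a ≫ θ.app (G.obj (F.obj a)) =
      adjH.unit.app a ≫ Hr.map (ρ.inv.app a) := by
    have := Adjunction.unit_rightAdjointUniq_hom_app (adjF.comp adjG)
      (adjH.ofNatIsoLeft ρ.symm) a
    rw [ofNatIsoLeft_unit_app'] at this
    simpa using this
  have hnat : Fr.map (Gr.map (G.map u)) ≫ θ.app (G.obj c) =
      θ.app (G.obj (F.obj a)) ≫ Hr.map (G.map u) := by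
    simpa using θ.naturality (G.map u)
  rw [Adjunction.homEquiv_unit, Adjunction.homEquiv_unit]
  have h : u ≫ adjG.unit.app c = adjG.unit.app (F.obj a) ≫ Gr.map (G.map u) := by
    simpa using adjG.unit.naturality u
  rw [Adjunction.comp_unit_app, Category.assoc] at huniq
  simp only [Functor.map_comp, Category.assoc]
  rw [← Functor.map_comp_assoc, h, Functor.map_comp_assoc, hnat, reassoc_of% huniq]

lemma key_iff (γ : C ⥤ E) (β : D ⥤ E) (p : A ⥤ C) (q : A ⥤ D) (r : A ⥤ E)
    (γr : E ⥤ C) (βr : E ⥤ D) (pr : C ⥤ A) (qr : D ⥤ A) (rr : E ⥤ A)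
    (adjγ : γ ⊣ γr) (adjβ : β ⊣ βr) (adjp : p ⊣ pr) (adjq : q ⊣ qr) (adjr : r ⊣ rr)
    (σ : p ⋙ γ ≅ r) (τ : q ⋙ β ≅ r)
    (X : Comma γ β) (hX : IsIso X.hom) (a : A)
    (u : p.obj a ⟶ X.left) (v : q.obj a ⟶ X.right) :
    (γ.map u ≫ X.hom = (σ.hom.app a ≫ τ.inv.app a) ≫ β.map v) ↔
    ((adjp.homEquiv a X.left) u ≫
        (pr.map (adjγ.unit.app X.left) ≫
          (Adjunction.rightAdjointUniq (adjp.comp adjγ)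
            (adjr.ofNatIsoLeft σ.symm)).hom.app (γ.obj X.left))
      = (adjq.homEquiv a X.right) v ≫
        (qr.map (adjβ.unit.app X.right) ≫
          (Adjunction.rightAdjointUniq (adjq.comp adjβ)
            (adjr.ofNatIsoLeft τ.symm)).hom.app (β.obj X.right) ≫
          rr.map (@CategoryTheory.inv E _ _ _ X.hom hX))) := by
  haveI := hX
  have h1 := key_transpose p γ r pr γr rr adjp adjγ adjr σ a X.left u
  have h2 := key_transpose q β r qr βr rr adjq adjβ adjr τ a X.right v
  have h2' := congrArg (· ≫ rr.map (inv X.hom)) h2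
  simp only [Category.assoc] at h1 h2' ⊢
  rw [h1, h2', ← Adjunction.homEquiv_naturality_right, Equiv.apply_eq_iff_eq]
  constructor
  · intro h
    rw [IsIso.eq_comp_inv, Category.assoc, h]
    simp
  · intro h
    rw [IsIso.eq_comp_inv, Category.assoc] at h
    have : σ.hom.app a ≫ σ.inv.app a ≫ γ.map u ≫ X.hom =
        σ.hom.app a ≫ τ.inv.app a ≫ β.map v := by rw [h]
    simpa using this

/-- Given a cospan `γ* : C ⥤ E ⟵ D : β*` together with functors `p* : A ⥤ C`, `q* : A ⥤ D`,
`r* : A ⥤ E` commuting with the cospan, such that all five functors admit right adjoints and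
`A` has pullbacks, the induced functor `A ⥤ C ×_E D` has a right adjoint sending
`(c, d, e : γ*c ≅ β*d)` to the pullback in `A` of
`p_* c ⟶ r_* γ* c ≅ r_* β* d ⟵ q_* d`, where the maps are induced by the units of the
adjunctions `γ* ⊣ γ_*` and `β* ⊣ β_*` (composed with the canonical identifications
`γ_* ⋙ p_* ≅ r_*` and `β_* ⋙ q_* ≅ r_*`). -/
theorem pullback_category_right_adjoint
    (γ : C ⥤ E) (β : D ⥤ E) (p : A ⥤ C) (q : A ⥤ D) (r : A ⥤ E)
    (γr : E ⥤ C) (βr : E ⥤ D) (pr : C ⥤ A) (qr : D ⥤ A) (rr : E ⥤ A)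
    (adjγ : γ ⊣ γr) (adjβ : β ⊣ βr) (adjp : p ⊣ pr) (adjq : q ⊣ qr) (adjr : r ⊣ rr)
    (σ : p ⋙ γ ≅ r) (τ : q ⋙ β ≅ r)
    [Limits.HasPullbacks A] :
    ∃ (Rt : ObjectProperty.FullSubcategory (fun X : Comma γ β => IsIso X.hom) ⥤ A)
      (_adj : toPB γ β p q r σ τ ⊣ Rt),
      ∀ X : ObjectProperty.FullSubcategory (fun X : Comma γ β => IsIso X.hom),
        Nonempty (Rt.obj X ≅
          Limits.pullback
            (pr.map (adjγ.unit.app X.obj.left) ≫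
              (Adjunction.rightAdjointUniq (adjp.comp adjγ)
                (adjr.ofNatIsoLeft σ.symm)).hom.app (γ.obj X.obj.left))
            (qr.map (adjβ.unit.app X.obj.right) ≫
              (Adjunction.rightAdjointUniq (adjq.comp adjβ)
                (adjr.ofNatIsoLeft τ.symm)).hom.app (β.obj X.obj.right) ≫
              rr.map (@CategoryTheory.inv E _ _ _ X.obj.hom X.property))) := by
  let f : ∀ X : ObjectProperty.FullSubcategory (fun X : Comma γ β => IsIso X.hom),
      pr.obj X.obj.left ⟶ rr.obj (γ.obj X.obj.left) := fun X =>
    pr.map (adjγ.unit.app X.obj.left) ≫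
      (Adjunction.rightAdjointUniq (adjp.comp adjγ)
        (adjr.ofNatIsoLeft σ.symm)).hom.app (γ.obj X.obj.left)
  let g : ∀ X : ObjectProperty.FullSubcategory (fun X : Comma γ β => IsIso X.hom),
      qr.obj X.obj.right ⟶ rr.obj (γ.obj X.obj.left) := fun X =>
    qr.map (adjβ.unit.app X.obj.right) ≫
      (Adjunction.rightAdjointUniq (adjq.comp adjβ)
        (adjr.ofNatIsoLeft τ.symm)).hom.app (β.obj X.obj.right) ≫
      rr.map (@CategoryTheory.inv E _ _ _ X.obj.hom X.property)
  let e : ∀ (a : A) (X : ObjectProperty.FullSubcategory (fun X : Comma γ β => IsIso X.hom)),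
      ((toPB γ β p q r σ τ).obj a ⟶ X) ≃ (a ⟶ Limits.pullback (f X) (g X)) := fun a X =>
    { toFun := fun φ => Limits.pullback.lift ((adjp.homEquiv _ _) φ.hom.left)
        ((adjq.homEquiv _ _) φ.hom.right)
        ((key_iff γ β p q r γr βr pr qr rr adjγ adjβ adjp adjq adjr σ τ X.obj X.property a
          φ.hom.left φ.hom.right).mp φ.hom.w)
      invFun := fun h => ⟨
        { left := (adjp.homEquiv _ _).symm (h ≫ Limits.pullback.fst (f X) (g X))
          right := (adjq.homEquiv _ _).symm (h ≫ Limits.pullback.snd (f X) (g X))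
          w := (key_iff γ β p q r γr βr pr qr rr adjγ adjβ adjp adjq adjr σ τ X.obj X.property a
            _ _).mpr (by
              simp only [Equiv.apply_symm_apply]
              show (h ≫ Limits.pullback.fst (f X) (g X)) ≫ f X =
                (h ≫ Limits.pullback.snd (f X) (g X)) ≫ g X
              rw [Category.assoc, Category.assoc, Limits.pullback.condition]) }⟩
      left_inv := fun φ => by
        apply ObjectProperty.hom_ext
        apply CommaMorphism.ext <;> simp
        · erw [Limits.pullback.lift_fst]; exact Equiv.symm_apply_apply _ _
        · erw [Limits.pullback.lift_snd]; exact Equiv.symm_apply_apply _ _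
      right_inv := fun h => by
        apply Limits.pullback.hom_ext <;> simp
        · erw [Limits.pullback.lift_fst]
        · erw [Limits.pullback.lift_snd] }
  have he : ∀ (a' a : A) (X : ObjectProperty.FullSubcategory (fun X : Comma γ β => IsIso X.hom))
      (h : a' ⟶ a) (φ : (toPB γ β p q r σ τ).obj a ⟶ X),
      e a' X ((toPB γ β p q r σ τ).map h ≫ φ) = h ≫ e a X φ := by
    intro a' a X h φ
    apply Limits.pullback.hom_ext
    · simp only [e, Equiv.coe_fn_mk, Limits.pullback.lift_fst, Category.assoc,
        Limits.pullback.lift_fst_assoc]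
      show (adjp.homEquiv a' X.obj.left) (p.map h ≫ φ.hom.left) =
        h ≫ (adjp.homEquiv a X.obj.left) φ.hom.left
      exact Adjunction.homEquiv_naturality_left _ _ _
    · simp only [e, Equiv.coe_fn_mk, Limits.pullback.lift_snd, Category.assoc,
        Limits.pullback.lift_snd_assoc]
      show (adjq.homEquiv a' X.obj.right) (q.map h ≫ φ.hom.right) =
        h ≫ (adjq.homEquiv a X.obj.right) φ.hom.right
      exact Adjunction.homEquiv_naturality_left _ _ _
  exact ⟨Adjunction.rightAdjointOfEquiv e he, Adjunction.adjunctionOfEquivRight e he,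
    fun X => ⟨Iso.refl _⟩⟩
end

section
/- Let C be a category with pushouts. Suppose a small category P is exhibited as a pushout B ⊔_A D of fully faithful inclusions of posets A ↪ B, A ↪ D (so P = B ∪_A D is the union poset). Then for any functor ∂ : P → C admitting the relevant colimits, there is a pushout square in C: colim_A ∂ → colim_D ∂, colim_A ∂ → colim_B ∂, with pushout colim_P ∂ (all colimits taken over the restrictions of ∂). -/
open CategoryTheory CategoryTheory.Limits

universe v u

theorem aux_iota_pre {P : Type v} [PartialOrder P] {C : Type u} [Category.{v} C] [HasColimits C]
    {A B' : Set P} (h : ∀ x : P, x ∈ A → x ∈ B') (F : P ⥤ C)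
    (j : ObjectProperty.FullSubcategory (fun x => x ∈ A : ObjectProperty P)) :
    colimit.ι (ObjectProperty.ι (fun x => x ∈ A : ObjectProperty P) ⋙ F) j ≫
        colimit.pre (ObjectProperty.ι (fun x => x ∈ B' : ObjectProperty P) ⋙ F)
          (ObjectProperty.ιOfLE (fun x hx => h x hx)) =
      colimit.ι (ObjectProperty.ι (fun x => x ∈ B' : ObjectProperty P) ⋙ F) ⟨j.1, h _ j.2⟩ :=
  colimit.ι_pre (ObjectProperty.ι (fun x => x ∈ B' : ObjectProperty P) ⋙ F)
    (ObjectProperty.ιOfLE (fun x hx => h x hx)) j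

/-- Let `C` be a cocomplete category and let the poset `P` be exhibited as a union (pushout)
`B ∪_A D` of two full subposets `B`, `D` along `A = B ∩ D`, in the sense that every element
of `P` lies in `B` or `D` and every relation `x ≤ y` of `P` holds within `B` or within `D`.
Then for any diagram `∂ : P ⥤ C` the square
`colim_A ∂ → colim_B ∂`, `colim_A ∂ → colim_D ∂`, `colim_B ∂ → colim_P ∂`,
`colim_D ∂ → colim_P ∂` (all maps induced by restriction) is a pushout square in `C`. -/
theorem colimit_decomposition_along_poset_pushout
    {P : Type v} [PartialOrder P] {C : Type u} [Category.{v} C] [HasColimits C]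
    (B D : Set P)
    (hcover : ∀ x : P, x ∈ B ∨ x ∈ D)
    (hmor : ∀ x y : P, x ≤ y → (x ∈ B ∧ y ∈ B) ∨ (x ∈ D ∧ y ∈ D))
    (F : P ⥤ C) :
    IsPushout
      (show colimit (ObjectProperty.ι (fun x => x ∈ B ∩ D : ObjectProperty P) ⋙ F) ⟶
          colimit (ObjectProperty.ι (fun x => x ∈ B : ObjectProperty P) ⋙ F) from
        colimit.pre (ObjectProperty.ι (fun x => x ∈ B : ObjectProperty P) ⋙ F)
          (ObjectProperty.ιOfLE (fun _ hx => hx.1)))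
      (show colimit (ObjectProperty.ι (fun x => x ∈ B ∩ D : ObjectProperty P) ⋙ F) ⟶
          colimit (ObjectProperty.ι (fun x => x ∈ D : ObjectProperty P) ⋙ F) from
        colimit.pre (ObjectProperty.ι (fun x => x ∈ D : ObjectProperty P) ⋙ F)
          (ObjectProperty.ιOfLE (fun _ hx => hx.2)))
      (colimit.pre F (ObjectProperty.ι (fun x => x ∈ B : ObjectProperty P)))
      (colimit.pre F (ObjectProperty.ι (fun x => x ∈ D : ObjectProperty P))) := by
  classical
  apply IsPushout.of_isColimit'
  case w =>
    constructor
    apply colimit.hom_ext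
    intro j
    rw [← Category.assoc, ← Category.assoc,
      aux_iota_pre (fun x (hx : x ∈ B ∩ D) => hx.1) F j,
      aux_iota_pre (fun x (hx : x ∈ B ∩ D) => hx.2) F j,
      colimit.ι_pre, colimit.ι_pre]
    rfl
  refine PushoutCocone.IsColimit.mk _ ?_ ?_ ?_ ?_
  case refine_1 =>
    intro s
    refine colimit.desc F ⟨s.pt, fun x => ?_, ?_⟩
    · exact if h : x ∈ B then colimit.ι (ObjectProperty.ι (fun x => x ∈ B : ObjectProperty P) ⋙ F)
        ⟨x, h⟩ ≫ s.inl
      else colimit.ι (ObjectProperty.ι (fun x => x ∈ D : ObjectProperty P) ⋙ F)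
        ⟨x, (hcover x).resolve_left h⟩ ≫ s.inr
    · intro x y le
      have key : ∀ (z : P) (hz : z ∈ B) (hz' : z ∈ D),
          colimit.ι (ObjectProperty.ι (fun x => x ∈ B : ObjectProperty P) ⋙ F) ⟨z, hz⟩ ≫ s.inl =
            colimit.ι (ObjectProperty.ι (fun x => x ∈ D : ObjectProperty P) ⋙ F) ⟨z, hz'⟩ ≫ s.inr := by
        intro z hz hz'
        have h2 := congrArg (fun t =>
          colimit.ι (ObjectProperty.ι (fun x => x ∈ B ∩ D : ObjectProperty P) ⋙ F) ⟨z, hz, hz'⟩ ≫ t)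
          s.condition
        dsimp only at h2
        rw [← Category.assoc, ← Category.assoc,
          aux_iota_pre (fun x (hx : x ∈ B ∩ D) => hx.1) F ⟨z, hz, hz'⟩,
          aux_iota_pre (fun x (hx : x ∈ B ∩ D) => hx.2) F ⟨z, hz, hz'⟩] at h2
        exact h2
      dsimp only
      simp only [Functor.const_obj_map]
      erw [Category.comp_id]
      rcases hmor x y le.le with ⟨hx, hy⟩ | ⟨hx, hy⟩
      · rw [dif_pos hx, dif_pos hy, ← Category.assoc]
        exact congrArg (fun t => t ≫ s.inl) (colimit.w
          (ObjectProperty.ι (fun x => x ∈ B : ObjectProperty P) ⋙ F)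
          (ObjectProperty.homMk (homOfLE le.le) : (⟨x, hx⟩ : ObjectProperty.FullSubcategory (fun x => x ∈ B : ObjectProperty P)) ⟶ ⟨y, hy⟩))
      · by_cases hxB : x ∈ B
        · rw [dif_pos hxB, key x hxB hx]
          by_cases hyB : y ∈ B
          · rw [dif_pos hyB, key y hyB hy, ← Category.assoc]
            exact congrArg (fun t => t ≫ s.inr) (colimit.w
              (ObjectProperty.ι (fun x => x ∈ D : ObjectProperty P) ⋙ F)
              (ObjectProperty.homMk (homOfLE le.le) : (⟨x, hx⟩ : ObjectProperty.FullSubcategory (fun x => x ∈ D : ObjectProperty P)) ⟶ ⟨y, hy⟩))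
          · rw [dif_neg hyB, ← Category.assoc]
            exact congrArg (fun t => t ≫ s.inr) (colimit.w
              (ObjectProperty.ι (fun x => x ∈ D : ObjectProperty P) ⋙ F)
              (ObjectProperty.homMk (homOfLE le.le) : (⟨x, hx⟩ : ObjectProperty.FullSubcategory (fun x => x ∈ D : ObjectProperty P)) ⟶ ⟨y, _⟩))
        · rw [dif_neg hxB]
          by_cases hyB : y ∈ B
          · rw [dif_pos hyB, key y hyB hy, ← Category.assoc]
            exact congrArg (fun t => t ≫ s.inr) (colimit.w
              (ObjectProperty.ι (fun x => x ∈ D : ObjectProperty P) ⋙ F)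
              (ObjectProperty.homMk (homOfLE le.le) : (⟨x, _⟩ : ObjectProperty.FullSubcategory (fun x => x ∈ D : ObjectProperty P)) ⟶ ⟨y, hy⟩))
          · rw [dif_neg hyB, ← Category.assoc]
            exact congrArg (fun t => t ≫ s.inr) (colimit.w
              (ObjectProperty.ι (fun x => x ∈ D : ObjectProperty P) ⋙ F)
              (ObjectProperty.homMk (homOfLE le.le) : (⟨x, _⟩ : ObjectProperty.FullSubcategory (fun x => x ∈ D : ObjectProperty P)) ⟶ ⟨y, _⟩))
  case refine_2 =>
    intro s
    apply colimit.hom_ext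
    intro j
    obtain ⟨x, hx⟩ := j
    rw [colimit.ι_pre_assoc, colimit.ι_desc]
    dsimp only
    split_ifs with h
    · rfl
    · exact absurd hx h
  case refine_3 =>
    intro s
    apply colimit.hom_ext
    intro j
    obtain ⟨x, hx⟩ := j
    rw [colimit.ι_pre_assoc, colimit.ι_desc]
    dsimp only
    split_ifs with h
    · have h2 := congrArg (fun t =>
        colimit.ι (ObjectProperty.ι (fun x => x ∈ B ∩ D : ObjectProperty P) ⋙ F) ⟨x, h, hx⟩ ≫ t)
        s.condition
      dsimp only at h2
      rw [← Category.assoc, ← Category.assoc,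
        aux_iota_pre (fun x (hx : x ∈ B ∩ D) => hx.1) F ⟨x, h, hx⟩,
        aux_iota_pre (fun x (hx : x ∈ B ∩ D) => hx.2) F ⟨x, h, hx⟩] at h2
      exact h2
    · rfl
  case refine_4 =>
    intro s m hl hr
    apply colimit.hom_ext
    intro x
    rw [colimit.ι_desc]
    dsimp only
    split_ifs with h
    · rw [← hl, colimit.ι_pre_assoc]
      rfl
    · rw [← hr, colimit.ι_pre_assoc]
      rfl
end

section
/- Let C, D be categories where D has an initial object that is strict (every morphism into it is an isomorphism), and let F : C → D be a fully faithful functor whose essential image does not contain the initial object of D. Then the extension F^◁ : C^◁ → D of F along the left cone (sending the new cone point to the initial object of D) is again fully faithful. -/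
/-!
Hom-sets out of the cone point are singletons on both sides, since it goes to an initial object.
Hom-sets from `C` into the cone point are empty in `C^◁`, and also in `D`: by strictness a map
`F X ⟶ ⊥_ D` would be an isomorphism, putting `⊥_ D` in the essential image of `F`.
-/

open CategoryTheory CategoryTheory.Limits

namespace CategoryTheory

theorem Limits.isEmpty_hom_initial_of_isEmpty_iso {D : Type*} [Category D] [HasInitial D]
    [HasStrictInitialObjects D] {X : D} (h : IsEmpty (X ≅ ⊥_ D)) : IsEmpty (X ⟶ ⊥_ D) :=
  ⟨fun f => h.false (asIso f)⟩

namespace WithInitial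

variable {C : Type*} [Category C] {D : Type*} [Category D] {Z : D} (F : C ⥤ D)
  (M : ∀ x : C, Z ⟶ F.obj x) (hM : ∀ (x y : C) (f : x ⟶ y), M x ≫ F.map f = M y)

theorem lift_faithful [F.Faithful] : (lift F M hM).Faithful where
  map_injective {X Y} f g h := by
    match X, Y with
    | of _, of _ => exact F.map_injective h
    | of _, star => exact (false_of_to_star f).elim
    | star, _ => exact Subsingleton.elim f g

theorem lift_full [F.Full] (hZ : IsInitial Z) (hF : ∀ x : C, IsEmpty (F.obj x ⟶ Z)) :
    (lift F M hM).Full where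
  map_surjective {X Y} g := by
    match X, Y with
    | of _, of _ => exact ⟨F.preimage g, F.map_preimage g⟩
    | of x, star => exact ((hF x).false g).elim
    | star, of _ => exact ⟨PUnit.unit, hZ.hom_ext _ _⟩
    | star, star => exact ⟨PUnit.unit, hZ.hom_ext _ _⟩

end WithInitial

end CategoryTheory

/-- Let `D` be a category with a strict initial object and let `F : C ⥤ D` be a fully
faithful functor whose essential image does not contain the initial object of `D`.  Then the
extension `F^◁ : C^◁ ⥤ D` of `F` along the left cone (sending the adjoined initial object of
`C^◁ = WithInitial C` to the initial object of `D`) is again fully faithful. -/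
theorem cone_extension_fully_faithful
    {C : Type*} [Category C] {D : Type*} [Category D]
    [HasInitial D] [HasStrictInitialObjects D]
    (F : C ⥤ D) [F.Full] [F.Faithful]
    (hF : ∀ X : C, IsEmpty (F.obj X ≅ ⊥_ D)) :
    (WithInitial.lift F (fun X => initial.to (F.obj X))
        (fun _ _ f => initial.to_comp (F.map f))).Full ∧
    (WithInitial.lift F (fun X => initial.to (F.obj X))
        (fun _ _ f => initial.to_comp (F.map f))).Faithful :=
  ⟨WithInitial.lift_full F _ _ initialIsInitial
      fun X => isEmpty_hom_initial_of_isEmpty_iso (hF X),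
    WithInitial.lift_faithful F _ _⟩
end
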